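/- For all x > 0, 1/2 < x/tanh(x) − log(cosh(x))/tanh(x)² < log 2. -/

import Mathlib

/-!
Put `t = tanh x ∈ (0, 1)`. Since `1 ± t = exp (± x) / cosh x`, the function
`G t = (1 + t) log (1 + t) + (1 - t) log (1 - t)` (`symMulLog`) equals `2 (x t - log cosh x)`
there, so the expression is `G t / (2 t²)` and the claim is `t² < G t < 2 log 2 · t²`
on `(0, 1)`.
Both follow from the elementary bounds `2t < log (1 + t) - log (1 - t) < 2t / (1 - t²)` by repeated
monotonicity arguments: `G - t²` vanishes at `0` with positive derivative, and `G t / t²` is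
increasing on `(0, 1]`, where it ends at `G 1 = 2 log 2`.
-/

open Real Set

lemma lt_of_hasDerivAt_pos {f f' : ℝ → ℝ} {a b x : ℝ}
    (hf : ∀ y ∈ Ico a b, HasDerivAt f (f' y) y) (hf' : ∀ y ∈ Ioo a b, 0 < f' y)
    (hx : x ∈ Ioo a b) : f a < f x := by
  have hmono : StrictMonoOn f (Ico a b) :=
    strictMonoOn_of_hasDerivWithinAt_pos (convex_Ico a b)
      (fun y hy ↦ (hf y hy).continuousAt.continuousWithinAt)
      (fun y hy ↦ (hf y (interior_subset hy)).hasDerivWithinAt)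
      (fun y hy ↦ hf' y (by rwa [interior_Ico] at hy))
  exact hmono (left_mem_Ico.2 (hx.1.trans hx.2)) (Ioo_subset_Ico_self hx) hx.1

lemma tanh_pos {x : ℝ} (hx : 0 < x) : 0 < tanh x := by
  rw [tanh_eq_sinh_div_cosh]
  exact div_pos (sinh_pos_iff.2 hx) (cosh_pos x)

noncomputable def symMulLog (t : ℝ) : ℝ := (1 + t) * log (1 + t) + (1 - t) * log (1 - t)

lemma continuous_symMulLog : Continuous symMulLog :=
  (continuous_mul_log.comp (continuous_const.add continuous_id)).add
    (continuous_mul_log.comp (continuous_const.sub continuous_id))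

lemma hasDerivAt_log_one_add_sub_log_one_sub {t : ℝ} (ht : t ∈ Ioo (-1) 1) :
    HasDerivAt (fun t ↦ log (1 + t) - log (1 - t)) (2 / (1 - t ^ 2)) t := by
  have h₁ : 1 + t ≠ 0 := by linarith [ht.1]
  have h₂ : 1 - t ≠ 0 := by linarith [ht.2]
  refine ((((hasDerivAt_id' t).const_add 1).log h₁).sub
    (((hasDerivAt_id' t).const_sub 1).log h₂)).congr_deriv ?_
  rw [show 1 - t ^ 2 = (1 + t) * (1 - t) by ring]
  field_simp
  ring

lemma hasDerivAt_symMulLog {t : ℝ} (ht : t ∈ Ioo (-1) 1) :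
    HasDerivAt symMulLog (log (1 + t) - log (1 - t)) t := by
  have h₁ : 1 + t ≠ 0 := by linarith [ht.1]
  have h₂ : 1 - t ≠ 0 := by linarith [ht.2]
  have d₁ := (hasDerivAt_id' t).const_add 1
  have d₂ := (hasDerivAt_id' t).const_sub 1
  refine ((d₁.mul (d₁.log h₁)).add (d₂.mul (d₂.log h₂))).congr_deriv ?_
  field_simp
  ring

lemma two_mul_lt_log_one_add_sub_log_one_sub {t : ℝ} (ht : t ∈ Ioo 0 1) :
    2 * t < log (1 + t) - log (1 - t) := by
  have key := lt_of_hasDerivAt_pos (f := fun t ↦ log (1 + t) - log (1 - t) - 2 * t)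
    (f' := fun t ↦ 2 / (1 - t ^ 2) - 2)
    (fun y hy ↦ ((hasDerivAt_log_one_add_sub_log_one_sub
      (Ico_subset_Ioo_left neg_one_lt_zero hy)).sub ((hasDerivAt_id' y).const_mul 2)).congr_deriv
        (by ring))
    (fun y hy ↦ ?_) ht
  · norm_num at key
    linarith
  · have hy₂ : 0 < 1 - y ^ 2 := by nlinarith [hy.1, hy.2]
    rw [sub_pos, lt_div_iff₀ hy₂]
    nlinarith [hy.1]

lemma log_one_add_sub_log_one_sub_lt {t : ℝ} (ht : t ∈ Ioo 0 1) :
    log (1 + t) - log (1 - t) < 2 * t / (1 - t ^ 2) := by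
  have key := lt_of_hasDerivAt_pos
    (f := fun t ↦ 2 * t / (1 - t ^ 2) - (log (1 + t) - log (1 - t)))
    (f' := fun t ↦ 4 * t ^ 2 / (1 - t ^ 2) ^ 2) (fun y hy ↦ ?_) (fun y hy ↦ ?_) ht
  · norm_num at key
    linarith
  · have hy₂ : 1 - y ^ 2 ≠ 0 := by nlinarith [hy.1, hy.2]
    refine ((((hasDerivAt_id' y).const_mul 2).div ((hasDerivAt_pow 2 y).const_sub 1) hy₂).sub
      (hasDerivAt_log_one_add_sub_log_one_sub
        (Ico_subset_Ioo_left neg_one_lt_zero hy))).congr_deriv ?_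
    field_simp
    ring
  · have hy₂ : 0 < 1 - y ^ 2 := by nlinarith [hy.1, hy.2]
    exact div_pos (by nlinarith [hy.1]) (pow_pos hy₂ 2)

lemma sq_lt_symMulLog {t : ℝ} (ht : t ∈ Ioo 0 1) : t ^ 2 < symMulLog t := by
  have key := lt_of_hasDerivAt_pos (f := fun t ↦ symMulLog t - t ^ 2)
    (f' := fun t ↦ log (1 + t) - log (1 - t) - 2 * t)
    (fun y hy ↦ ((hasDerivAt_symMulLog (Ico_subset_Ioo_left neg_one_lt_zero hy)).sub
      (hasDerivAt_pow 2 y)).congr_deriv (by norm_num))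
    (fun y hy ↦ by linarith [two_mul_lt_log_one_add_sub_log_one_sub hy]) ht
  norm_num [symMulLog] at key
  exact key

lemma two_mul_symMulLog_lt {t : ℝ} (ht : t ∈ Ioo 0 1) :
    2 * symMulLog t < t * (log (1 + t) - log (1 - t)) := by
  have key := lt_of_hasDerivAt_pos
    (f := fun t ↦ t * (log (1 + t) - log (1 - t)) - 2 * symMulLog t)
    (f' := fun t ↦ 2 * t / (1 - t ^ 2) - (log (1 + t) - log (1 - t)))
    (fun y hy ↦ ?_) (fun y hy ↦ by linarith [log_one_add_sub_log_one_sub_lt hy]) ht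
  · norm_num [symMulLog] at key
    exact key
  · have hy : y ∈ Ioo (-1) 1 := Ico_subset_Ioo_left neg_one_lt_zero hy
    refine (((hasDerivAt_id' y).mul (hasDerivAt_log_one_add_sub_log_one_sub hy)).sub
      ((hasDerivAt_symMulLog hy).const_mul 2)).congr_deriv ?_
    ring

lemma strictMonoOn_symMulLog_div_sq : StrictMonoOn (fun t ↦ symMulLog t / t ^ 2) (Ioc 0 1) := by
  refine strictMonoOn_of_hasDerivWithinAt_pos (convex_Ioc 0 1)
    (continuous_symMulLog.continuousOn.div (continuous_pow 2).continuousOn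
      fun t ht ↦ pow_ne_zero 2 ht.1.ne')
    (f' := fun t ↦ (t * (log (1 + t) - log (1 - t)) - 2 * symMulLog t) / t ^ 3)
    (fun t ht ↦ ?_) (fun t ht ↦ ?_) <;> rw [interior_Ioc] at ht
  · have ht₀ : t ≠ 0 := ht.1.ne'
    refine ((hasDerivAt_symMulLog (Ioo_subset_Ioo_left neg_one_lt_zero.le ht)).div
      (hasDerivAt_pow 2 t) (pow_ne_zero 2 ht₀)).hasDerivWithinAt.congr_deriv ?_
    field_simp
    ring
  · exact div_pos (by linarith [two_mul_symMulLog_lt ht]) (pow_pos ht.1 3)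

lemma symMulLog_lt {t : ℝ} (ht : t ∈ Ioo 0 1) : symMulLog t < 2 * log 2 * t ^ 2 := by
  have key := strictMonoOn_symMulLog_div_sq (Ioo_subset_Ioc_self ht) (right_mem_Ioc.2 one_pos) ht.2
  have hone : symMulLog 1 = 2 * log 2 := by norm_num [symMulLog]
  simp only [hone, one_pow, div_one] at key
  rwa [div_lt_iff₀ (pow_pos ht.1 2)] at key

lemma log_one_add_tanh (x : ℝ) : log (1 + tanh x) = x - log (cosh x) := by
  have h : 1 + tanh x = exp x / cosh x := by
    rw [tanh_eq_sinh_div_cosh, ← cosh_add_sinh]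
    field_simp [(cosh_pos x).ne']
  rw [h, log_div (exp_ne_zero x) (cosh_pos x).ne', log_exp]

lemma symMulLog_tanh (x : ℝ) : symMulLog (tanh x) = 2 * (x * tanh x - log (cosh x)) := by
  have h := log_one_add_tanh (-x)
  rw [tanh_neg, cosh_neg, ← sub_eq_add_neg] at h
  rw [symMulLog, log_one_add_tanh, h]
  ring

theorem stmt_14 (x : ℝ) (hx : 0 < x) :
    1 / 2 < x / Real.tanh x - Real.log (Real.cosh x) / Real.tanh x ^ 2 ∧
    x / Real.tanh x - Real.log (Real.cosh x) / Real.tanh x ^ 2 < Real.log 2 := by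
  have ht : tanh x ∈ Ioo 0 1 := ⟨tanh_pos hx, tanh_lt_one x⟩
  have key : x / tanh x - log (cosh x) / tanh x ^ 2 = symMulLog (tanh x) / (2 * tanh x ^ 2) := by
    have := ht.1.ne'
    rw [symMulLog_tanh]
    field_simp
  have hden : 0 < 2 * tanh x ^ 2 := mul_pos two_pos (pow_pos ht.1 2)
  rw [key, lt_div_iff₀ hden, div_lt_iff₀ hden]
  exact ⟨by linarith [sq_lt_symMulLog ht], by linarith [symMulLog_lt ht]⟩
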